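/- For any α > 0, the function p̃_α(t,x) = (1/2)(1 − erfi(x/√(2t))/erfi(α/√2)) defined on (0,∞) × ℝ satisfies the backward heat equation ∂_t p̃_α(t,x) + (1/2)∂_{xx} p̃_α(t,x) = 0, together with boundary conditions p̃_α(t,0) = 1/2 and p̃_α(t, α√t) = 0 for all t > 0. -/

import Mathlib

/-!
Writing `ξ = x / √(2t)`, every function of the form `u(t, x) = f(ξ)` has
`∂ₜu = -ξ f'(ξ) / (2t)` and `∂ₓₓu = f''(ξ) / (2t)`, so it solves the backward heat equation
exactly when `f'' = 2ξ f'`. Since `erfi' = (2/√π) e^{ξ²}`, this holds for every affine image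
of `erfi`, in particular for the profile of `p̃_α`. The boundary values are `erfi 0 = 0` and
`α √t / √(2t) = α / √2`.
-/

open Real

noncomputable def erfi (x : ℝ) : ℝ := (2 / Real.sqrt π) * ∫ z in (0:ℝ)..x, Real.exp (z ^ 2)

noncomputable def ptilde (α t x : ℝ) : ℝ :=
  (1 / 2) * (1 - erfi (x / Real.sqrt (2 * t)) / erfi (α / Real.sqrt 2))

lemma hasDerivAt_erfi (y : ℝ) : HasDerivAt erfi (2 / √π * exp (y ^ 2)) y :=
  ((by fun_prop : Continuous fun z : ℝ => exp (z ^ 2)).integral_hasStrictDerivAt 0 y)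
    |>.hasDerivAt.const_mul _

@[simp]
lemma erfi_zero : erfi 0 = 0 := by
  simp [erfi]

lemma erfi_pos {y : ℝ} (hy : 0 < y) : 0 < erfi y :=
  mul_pos (by positivity) <| intervalIntegral.intervalIntegral_pos_of_pos
    ((by fun_prop : Continuous fun z : ℝ => exp (z ^ 2)).intervalIntegrable 0 y)
    (fun _ => exp_pos _) hy

lemma hasDerivAt_const_mul_exp_sq (k y : ℝ) :
    HasDerivAt (fun y => k * exp (y ^ 2)) (2 * y * (k * exp (y ^ 2))) y :=
  ((hasDerivAt_pow 2 y).exp.const_mul k).congr_deriv (by push_cast; ring)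

lemma hasDerivAt_div_sqrt_two_mul {t : ℝ} (ht : 0 < t) (x : ℝ) :
    HasDerivAt (fun s => x / √(2 * s)) (-(x / √(2 * t)) / (2 * t)) t := by
  have h2t : 0 < 2 * t := by positivity
  have hσ : √(2 * t) ^ 2 = 2 * t := sq_sqrt h2t.le
  have hσ0 : √(2 * t) ≠ 0 := (sqrt_pos.mpr h2t).ne'
  have hsqrt : HasDerivAt (fun s => √(2 * s)) (1 / √(2 * t)) t :=
    (((hasDerivAt_id' t).const_mul 2).sqrt h2t.ne').congr_deriv (by field_simp)
  refine ((hasDerivAt_const t x).div hsqrt hσ0).congr_deriv ?_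
  rw [hσ]
  field_simp
  ring

theorem backward_heat_of_similarity {f f' : ℝ → ℝ} (hf : ∀ y, HasDerivAt f (f' y) y)
    (hf' : ∀ y, HasDerivAt f' (2 * y * f' y) y) {t : ℝ} (ht : 0 < t) (x : ℝ) :
    deriv (fun s => f (x / √(2 * s))) t + 1 / 2 * deriv (deriv fun y => f (y / √(2 * t))) x
      = 0 := by
  have hσ : √(2 * t) ^ 2 = 2 * t := sq_sqrt (by positivity)
  have hσ0 : √(2 * t) ≠ 0 := (sqrt_pos.mpr (by positivity)).ne'
  have hscale (y : ℝ) : HasDerivAt (fun y => y / √(2 * t)) (1 / √(2 * t)) y := by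
    simpa using (hasDerivAt_id y).div_const √(2 * t)
  have hdt : HasDerivAt (fun s => f (x / √(2 * s))) _ t :=
    (hf _).comp t (hasDerivAt_div_sqrt_two_mul ht x)
  have hdx : deriv (fun y => f (y / √(2 * t))) = fun y => f' (y / √(2 * t)) * (1 / √(2 * t)) :=
    funext fun y => ((hf _).comp y (hscale y)).deriv
  have hdxx : HasDerivAt (fun y => f' (y / √(2 * t)) * (1 / √(2 * t))) _ x :=
    ((hf' _).comp x (hscale x)).mul_const _
  rw [hdt.deriv, hdx, hdxx.deriv]
  field_simp
  rw [hσ]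
  ring

theorem ptilde_backward_heat (α : ℝ) (hα : 0 < α) :
    (∀ t : ℝ, 0 < t → ∀ x : ℝ,
      deriv (fun s => ptilde α s x) t + (1 / 2) * deriv (deriv (fun y => ptilde α t y)) x = 0) ∧
    (∀ t : ℝ, 0 < t → ptilde α t 0 = 1 / 2) ∧
    (∀ t : ℝ, 0 < t → ptilde α t (α * Real.sqrt t) = 0) := by
  have hprofile (y : ℝ) : HasDerivAt (fun y => 1 / 2 * (1 - erfi y / erfi (α / √2)))
      (-1 / erfi (α / √2) * (1 / √π) * exp (y ^ 2)) y :=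
    (((hasDerivAt_erfi y).div_const _).const_sub 1).const_mul (1 / 2) |>.congr_deriv (by ring)
  refine ⟨fun t ht x => ?_, fun t _ => by simp [ptilde], fun t ht => ?_⟩
  · exact backward_heat_of_similarity hprofile (hasDerivAt_const_mul_exp_sq _) ht x
  · have harg : α * √t / √(2 * t) = α / √2 := by
      have : √t ≠ 0 := (sqrt_pos.mpr ht).ne'
      rw [sqrt_mul zero_le_two]
      field_simp
    rw [ptilde, harg, div_self (erfi_pos (by positivity)).ne']
    ring
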